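/- Define polynomials q_α ∈ ℚ[X] recursively by q_0(X) = 1 and q_{α+1}(X) = (2X+1)²·q_α(X) − 4X²·q_α(X−1). Then for every α ≥ 0, q_α is a polynomial of degree exactly α whose leading coefficient equals α!·2^{2α}. -/

import Mathlib

/-!
Write `Δp = p − p(X−1)`. Then `(2X+1)²p − 4X²p(X−1) = p + 4Xp + 4X·(XΔp)`, and by Taylor's formula
`XΔp` has degree at most `deg p` with top coefficient `deg p · lc p`, exactly like `X·p'`. So one step
of the recursion raises the degree by one and multiplies the leading coefficient by `4(α+1)`.
-/

open Polynomial

/-- The polynomials `q_α` defined by `q_0(X) = 1` and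
`q_{α+1}(X) = (2X+1)²·q_α(X) − 4X²·q_α(X−1)`. -/
noncomputable def qPoly : ℕ → Polynomial ℚ
  | 0 => 1
  | α + 1 => (2 * X + 1) ^ 2 * qPoly α - 4 * X ^ 2 * (qPoly α).comp (X - 1)

theorem Polynomial.coeff_taylor_of_natDegree_le_succ {R : Type*} [CommSemiring R] {p : R[X]}
    {k : ℕ} (hp : p.natDegree ≤ k + 1) (r : R) :
    (taylor r p).coeff k = p.coeff k + (k + 1) * p.coeff (k + 1) * r := by
  have hlin : (hasseDeriv k p).natDegree ≤ 1 := (natDegree_hasseDeriv_le p k).trans (by omega)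
  rw [taylor_coeff, eq_X_add_C_of_natDegree_le_one hlin]
  simp only [eval_add, eval_mul, eval_C, eval_X, hasseDeriv_coeff, zero_add, Nat.choose_self,
    Nat.add_comm 1 k, Nat.choose_succ_self_right]
  push_cast
  ring

theorem Polynomial.coeff_X_mul_sub_comp_X_sub_one {R : Type*} [CommRing R] {p : R[X]} {n m : ℕ}
    (hp : p.natDegree ≤ n) (hm : n ≤ m) :
    (X * (p - p.comp (X - 1))).coeff m = m * p.coeff m := by
  rcases m with _ | k
  · simp
  · have hcomp : p.comp (X - 1) = taylor (-1) p := by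
      rw [taylor_apply, map_neg, C_1, ← sub_eq_add_neg]
    rw [coeff_X_mul, coeff_sub, hcomp, coeff_taylor_of_natDegree_le_succ (hp.trans hm)]
    push_cast
    ring

noncomputable def qStep {R : Type*} [CommRing R] (p : R[X]) : R[X] :=
  (2 * X + 1) ^ 2 * p - 4 * X ^ 2 * p.comp (X - 1)

theorem coeff_succ_qStep {R : Type*} [CommRing R] {p : R[X]} {n k : ℕ} (hp : p.natDegree ≤ n)
    (hk : n ≤ k) : (qStep p).coeff (k + 1) = p.coeff (k + 1) + 4 * (k + 1) * p.coeff k := by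
  have hstep : qStep p = p + C 4 * (X * p) + C 4 * (X * (X * (p - p.comp (X - 1)))) := by
    rw [qStep, show (C 4 : R[X]) = 4 from map_ofNat C 4]
    ring
  rw [hstep, coeff_add, coeff_add, coeff_C_mul, coeff_C_mul, coeff_X_mul, coeff_X_mul,
    coeff_X_mul_sub_comp_X_sub_one hp hk]
  ring

theorem natDegree_qPoly_le_and_coeff (α : ℕ) :
    (qPoly α).natDegree ≤ α ∧ (qPoly α).coeff α = α.factorial * 2 ^ (2 * α) := by
  induction α with
  | zero => simp [qPoly]
  | succ α ih =>
    obtain ⟨hdeg, hcoeff⟩ := ih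
    have hsucc : qPoly (α + 1) = qStep (qPoly α) := rfl
    refine ⟨natDegree_le_iff_coeff_eq_zero.mpr fun m hm => ?_, ?_⟩
    · obtain ⟨k, rfl⟩ : ∃ k, m = k + 1 := Nat.exists_eq_add_one.mpr (by omega)
      rw [hsucc, coeff_succ_qStep hdeg (by omega : α ≤ k),
        coeff_eq_zero_of_natDegree_lt (by omega : (qPoly α).natDegree < k + 1),
        coeff_eq_zero_of_natDegree_lt (by omega : (qPoly α).natDegree < k)]
      ring
    · rw [hsucc, coeff_succ_qStep hdeg le_rfl, hcoeff,
        coeff_eq_zero_of_natDegree_lt (by omega : (qPoly α).natDegree < α + 1),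
        Nat.factorial_succ]
      push_cast
      ring

/-- Each `q_α` has degree exactly `α` and leading coefficient `α!·2^{2α}`. -/
theorem stmt_6 (α : ℕ) :
    (qPoly α).degree = (α : WithBot ℕ) ∧
    (qPoly α).leadingCoeff = (α.factorial : ℚ) * 2 ^ (2 * α) := by
  obtain ⟨hdeg, hcoeff⟩ := natDegree_qPoly_le_and_coeff α
  have hne : (qPoly α).coeff α ≠ 0 := by
    rw [hcoeff]
    positivity
  refine ⟨degree_eq_of_le_of_coeff_ne_zero (degree_le_of_natDegree_le hdeg) hne, ?_⟩
  rw [leadingCoeff, natDegree_eq_of_le_of_coeff_ne_zero hdeg hne, hcoeff]
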